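/- arXiv:math/0508128 — 5 statements merged into one kernel-verified Lean document; each statement's English description precedes it below -/
import Mathlib

section
/- For each l ∈ {1, …, 2d}, writing j = ⌈l/2⌉ (so φ_{2j−1}(x) = sin(jx) and φ_{2j}(x) = cos(jx)) and b_j = P'(−j²) = ∏_{k ≠ j}(k² − j²) (a nonzero integer), the constant-coefficient differential operator obtained from Q'(t) by substituting t = d/dx satisfies Q'(d/dx)φ_l = 2 b_j · φ_l', where φ_l' is the derivative of φ_l. -/
open Polynomial

/-- `φ_{2j-1}(x) = sin (j x)` and `φ_{2j}(x) = cos (j x)`; here `(l+1)/2 = ⌈l/2⌉`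
(natural division) is the index `j` corresponding to `l`. -/
noncomputable def phi (l : ℕ) : ℝ → ℝ := fun x =>
  if l % 2 = 1 then Real.sin ((((l + 1) / 2 : ℕ) : ℝ) * x)
  else Real.cos ((((l + 1) / 2 : ℕ) : ℝ) * x)

/-- The constant-coefficient differential operator `F(d/dx)` associated to a
real polynomial `F`, acting on functions `u : ℝ → ℝ`. -/
noncomputable def diffOp (F : Polynomial ℝ) (u : ℝ → ℝ) : ℝ → ℝ := fun x =>
  ∑ k ∈ Finset.range (F.natDegree + 1), F.coeff k * iteratedDeriv k u x

lemma diffOp_eq_sum (F : Polynomial ℝ) (u : ℝ → ℝ) (x : ℝ) (N : ℕ)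
    (hN : F.natDegree ≤ N) :
    diffOp F u x = ∑ k ∈ Finset.range (N + 1), F.coeff k * iteratedDeriv k u x := by
  unfold diffOp
  refine Finset.sum_subset ?_ ?_
  · intro k hk
    simp only [Finset.mem_range] at *
    omega
  · intro k hk hk2
    simp only [Finset.mem_range, not_lt] at hk2
    rw [Polynomial.coeff_eq_zero_of_natDegree_lt (by omega), zero_mul]

lemma diffOp_add (F G : Polynomial ℝ) (u : ℝ → ℝ) (x : ℝ) :
    diffOp (F + G) u x = diffOp F u x + diffOp G u x := by
  set N := max F.natDegree G.natDegree with hN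
  rw [diffOp_eq_sum (F + G) u x N ((Polynomial.natDegree_add_le F G).trans (le_refl _)),
    diffOp_eq_sum F u x N (le_max_left _ _), diffOp_eq_sum G u x N (le_max_right _ _),
    ← Finset.sum_add_distrib]
  refine Finset.sum_congr rfl fun k _ => ?_
  rw [Polynomial.coeff_add]; ring

lemma diffOp_C_mul (a : ℝ) (F : Polynomial ℝ) (u : ℝ → ℝ) (x : ℝ) :
    diffOp (C a * F) u x = a * diffOp F u x := by
  rw [diffOp_eq_sum (C a * F) u x F.natDegree (Polynomial.natDegree_C_mul_le a F),
    diffOp, Finset.mul_sum]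
  refine Finset.sum_congr rfl fun k _ => ?_
  rw [Polynomial.coeff_C_mul]; ring

lemma diffOp_monomial (n : ℕ) (a : ℝ) (u : ℝ → ℝ) (x : ℝ) :
    diffOp (monomial n a) u x = a * iteratedDeriv n u x := by
  rw [diffOp_eq_sum (monomial n a) u x n (Polynomial.natDegree_monomial_le a)]
  rw [Finset.sum_eq_single n]
  · simp [Polynomial.coeff_monomial]
  · intro k _ hk
    simp [Polynomial.coeff_monomial, Ne.symm hk]
  · intro h
    simp at h

lemma iter_even_odd (c : ℝ) (u v : ℝ → ℝ) (hu : Differentiable ℝ u) (hv : Differentiable ℝ v)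
    (h1 : deriv u = v) (h2 : deriv v = fun x => c * u x) :
    ∀ n : ℕ, iteratedDeriv (2 * n) u = (fun x => c ^ n * u x) ∧
      iteratedDeriv (2 * n + 1) u = (fun x => c ^ n * v x) := by
  intro n
  induction n with
  | zero => simp [iteratedDeriv_one, h1]
  | succ n ih =>
    have heven : iteratedDeriv (2 * (n + 1)) u = fun x => c ^ (n + 1) * u x := by
      rw [show 2 * (n + 1) = (2 * n + 1) + 1 by ring, iteratedDeriv_succ, ih.2]
      funext x
      rw [deriv_const_mul _ (hv x), h2]
      ring
    refine ⟨heven, ?_⟩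
    rw [iteratedDeriv_succ, heven]
    funext x
    rw [deriv_const_mul _ (hu x), h1]

lemma diffOp_odd (c : ℝ) (u v : ℝ → ℝ)
    (hiter : ∀ n : ℕ, iteratedDeriv (2 * n + 1) u = fun x => c ^ n * v x) :
    ∀ (S : Polynomial ℝ) (x : ℝ), diffOp (X * S.comp (X ^ 2)) u x = S.eval c * v x := by
  intro S
  induction S using Polynomial.induction_on' with
  | add p q hp hq =>
    intro x
    have h : (X : Polynomial ℝ) * (p + q).comp (X ^ 2) =
        X * p.comp (X ^ 2) + X * q.comp (X ^ 2) := by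
      rw [Polynomial.add_comp]; ring
    rw [h, diffOp_add, hp x, hq x, Polynomial.eval_add]; ring
  | monomial n a =>
    intro x
    have h : (X : Polynomial ℝ) * (monomial n a).comp (X ^ 2) = monomial (2 * n + 1) a := by
      rw [Polynomial.monomial_comp, ← pow_mul, ← Polynomial.C_mul_X_pow_eq_monomial]
      ring
    rw [h, diffOp_monomial, hiter n, Polynomial.eval_monomial]
    ring

/-- With `P(t) = ∏_{k=1}^d (t + k²)`, `Q(t) = ∏_{j=1}^d (t² + j²)`,
`j = ⌈l/2⌉` and `b_j = P'(-j²)`, one has `Q'(d/dx) φ_l = 2 b_j φ_l'`. -/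
theorem derivQ_apply_phi (d : ℕ) (hd : 1 ≤ d)
    (P Q : Polynomial ℝ)
    (hP : P = ∏ k ∈ Finset.Icc 1 d, (X + C ((k : ℝ) ^ 2)))
    (hQ : Q = ∏ j ∈ Finset.Icc 1 d, (X ^ 2 + C ((j : ℝ) ^ 2)))
    (l : ℕ) (hl1 : 1 ≤ l) (hl2 : l ≤ 2 * d) :
    diffOp (Polynomial.derivative Q) (phi l) =
      fun x =>
        2 * (Polynomial.derivative P).eval (-((((l + 1) / 2 : ℕ) : ℝ)) ^ 2) *
          deriv (phi l) x := by
  have hQP : Q = P.comp (X ^ 2) := by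
    rw [hP, hQ, Polynomial.prod_comp]
    refine Finset.prod_congr rfl fun k _ => ?_
    simp [Polynomial.add_comp]
  have hdQ : Polynomial.derivative Q =
      C 2 * (X * (Polynomial.derivative P).comp (X ^ 2)) := by
    rw [hQP, Polynomial.derivative_comp, Polynomial.derivative_X_pow]
    norm_num
    ring
  set j : ℕ := (l + 1) / 2 with hj
  set c : ℝ := -((((l + 1) / 2 : ℕ) : ℝ)) ^ 2 with hc
  rcases Nat.mod_two_eq_zero_or_one l with h | h
  · -- even: phi l = cos (j x)
    have hphi : phi l = fun x => Real.cos ((j : ℝ) * x) := by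
      funext x; simp [phi, h, ← hj]
    set v : ℝ → ℝ := fun x => -((j : ℝ) * Real.sin ((j : ℝ) * x)) with hv0
    have hder : ∀ x : ℝ, HasDerivAt (fun y => Real.cos ((j : ℝ) * y)) (v x) x := by
      intro x
      have hgt : HasDerivAt (fun y : ℝ => (j : ℝ) * y) (j : ℝ) x := by
        simpa using (hasDerivAt_id' (𝕜 := ℝ) x).const_mul (j : ℝ)
      have := (Real.hasDerivAt_cos ((j : ℝ) * x)).comp x hgt
      simp only [Function.comp_def] at this
      rw [hv0]
      exact this.congr_deriv (by beta_reduce; ring)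
    have hder2 : ∀ x : ℝ, HasDerivAt v (c * phi l x) x := by
      intro x
      have hgt : HasDerivAt (fun y : ℝ => (j : ℝ) * y) (j : ℝ) x := by
        simpa using (hasDerivAt_id' (𝕜 := ℝ) x).const_mul (j : ℝ)
      have := (((Real.hasDerivAt_sin ((j : ℝ) * x)).comp x hgt).const_mul (j : ℝ)).neg
      simp only [Function.comp_def] at this
      have h2 := this
      rw [hphi, hc]
      exact h2.congr_deriv (by rw [← hj]; beta_reduce; ring)
    have hu : Differentiable ℝ (phi l) := by
      rw [hphi]; intro x; exact (hder x).differentiableAt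
    have hv : Differentiable ℝ v := fun x => (hder2 x).differentiableAt
    have h1 : deriv (phi l) = v := by
      funext x; rw [hphi]; exact (hder x).deriv
    have h2 : deriv v = fun x => c * phi l x := by
      funext x; exact (hder2 x).deriv
    have hiter : ∀ n : ℕ, iteratedDeriv (2 * n + 1) (phi l) = fun x => c ^ n * v x :=
      fun n => (iter_even_odd c (phi l) v hu hv h1 h2 n).2
    funext x
    rw [hdQ, diffOp_C_mul, diffOp_odd c (phi l) v hiter (Polynomial.derivative P) x, h1]
    ring
  · -- odd: phi l = sin (j x)
    have hphi : phi l = fun x => Real.sin ((j : ℝ) * x) := by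
      funext x; simp [phi, h, ← hj]
    set v : ℝ → ℝ := fun x => (j : ℝ) * Real.cos ((j : ℝ) * x) with hv0
    have hder : ∀ x : ℝ, HasDerivAt (fun y => Real.sin ((j : ℝ) * y)) (v x) x := by
      intro x
      have hgt : HasDerivAt (fun y : ℝ => (j : ℝ) * y) (j : ℝ) x := by
        simpa using (hasDerivAt_id' (𝕜 := ℝ) x).const_mul (j : ℝ)
      have := (Real.hasDerivAt_sin ((j : ℝ) * x)).comp x hgt
      simp only [Function.comp_def] at this
      rw [hv0]
      exact this.congr_deriv (by beta_reduce; ring)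
    have hder2 : ∀ x : ℝ, HasDerivAt v (c * phi l x) x := by
      intro x
      have hgt : HasDerivAt (fun y : ℝ => (j : ℝ) * y) (j : ℝ) x := by
        simpa using (hasDerivAt_id' (𝕜 := ℝ) x).const_mul (j : ℝ)
      have := ((Real.hasDerivAt_cos ((j : ℝ) * x)).comp x hgt).const_mul (j : ℝ)
      simp only [Function.comp_def] at this
      rw [hphi, hc]
      exact this.congr_deriv (by rw [← hj]; beta_reduce; ring)
    have hu : Differentiable ℝ (phi l) := by
      rw [hphi]; intro x; exact (hder x).differentiableAt
    have hv : Differentiable ℝ v := fun x => (hder2 x).differentiableAt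
    have h1 : deriv (phi l) = v := by
      funext x; rw [hphi]; exact (hder x).deriv
    have h2 : deriv v = fun x => c * phi l x := by
      funext x; exact (hder2 x).deriv
    have hiter : ∀ n : ℕ, iteratedDeriv (2 * n + 1) (phi l) = fun x => c ^ n * v x :=
      fun n => (iter_even_odd c (phi l) v hu hv h1 h2 n).2
    funext x
    rw [hdQ, diffOp_C_mul, diffOp_odd c (phi l) v hiter (Polynomial.derivative P) x, h1]
    ring
end

section
/- For every x ∈ ℝ, the 2d × 2d Wronskian matrix whose (m, l) entry is the m-th derivative φ_l^{(m)}(x), for 0 ≤ m ≤ 2d − 1 and 1 ≤ l ≤ 2d, is invertible (equivalently, its determinant is nonzero at every point x). -/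
open Complex

open Real in
lemma iter_sin (j : ℝ) : ∀ m : ℕ, iteratedDeriv m (fun x => Real.sin (j*x)) =
    fun x => j^m * Real.sin (j*x + m*(π/2)) := by
  intro m
  induction m with
  | zero => simp
  | succ m ih =>
    funext y
    rw [iteratedDeriv_succ, ih]
    have hu : HasDerivAt (fun x : ℝ => j*x + m*(π/2)) j y := by
      simpa using ((hasDerivAt_id y).const_mul j).add_const ((m:ℝ)*(π/2))
    have h : HasDerivAt (fun x => j^m * Real.sin (j*x + m*(π/2)))
        (j^m * (Real.cos (j*y + m*(π/2)) * j)) y :=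
      ((Real.hasDerivAt_sin _).comp y hu).const_mul _
    rw [h.deriv, ← Real.sin_add_pi_div_two]
    push_cast
    ring_nf

open Real in
lemma iter_cos (j : ℝ) : ∀ m : ℕ, iteratedDeriv m (fun x => Real.cos (j*x)) =
    fun x => j^m * Real.cos (j*x + m*(π/2)) := by
  intro m
  induction m with
  | zero => simp
  | succ m ih =>
    funext y
    rw [iteratedDeriv_succ, ih]
    have hu : HasDerivAt (fun x : ℝ => j*x + m*(π/2)) j y := by
      simpa using ((hasDerivAt_id y).const_mul j).add_const ((m:ℝ)*(π/2))
    have h : HasDerivAt (fun x => j^m * Real.cos (j*x + m*(π/2)))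
        (j^m * (-Real.sin (j*y + m*(π/2)) * j)) y :=
      ((Real.hasDerivAt_cos _).comp y hu).const_mul _
    rw [h.deriv, ← Real.cos_add_pi_div_two]
    push_cast
    ring_nf

lemma exp_pi_div_two_I : Complex.exp (((Real.pi:ℂ)/2) * I) = I := by
  have h : ((Real.pi:ℂ)/2) = ((Real.pi/2 : ℝ) : ℂ) := by push_cast; ring
  rw [Complex.exp_mul_I, h]
  rw [show Complex.cos ((Real.pi/2 : ℝ) : ℂ) = ((Real.cos (Real.pi/2) : ℝ) : ℂ) by
    rw [Complex.ofReal_cos],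
    show Complex.sin ((Real.pi/2 : ℝ) : ℂ) = ((Real.sin (Real.pi/2) : ℝ) : ℂ) by
    rw [Complex.ofReal_sin]]
  simp

lemma exp_shift_pos (m : ℕ) (a : ℂ) :
    Complex.exp ((a + m*((Real.pi:ℂ)/2)) * I) = I^m * Complex.exp (a * I) := by
  rw [add_mul, Complex.exp_add, mul_assoc, Complex.exp_nat_mul, exp_pi_div_two_I]
  ring

lemma exp_shift_neg (m : ℕ) (a : ℂ) :
    Complex.exp (-(a + m*((Real.pi:ℂ)/2)) * I) = (-I)^m * Complex.exp (-a * I) := by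
  have h2 : Complex.exp (-(((Real.pi:ℂ)/2) * I)) = -I := by
    rw [Complex.exp_neg, exp_pi_div_two_I, inv_I]
  have h3 : (-(a + m*((Real.pi:ℂ)/2))) * I = (m:ℂ) * (-(((Real.pi:ℂ)/2) * I)) + -a * I := by
    ring
  rw [h3, Complex.exp_add, Complex.exp_nat_mul, h2]

lemma expand_sin (j x : ℝ) (m : ℕ) :
    ((j^m * Real.sin (j*x + m*(Real.pi/2)) : ℝ) : ℂ) =
      ((j:ℂ)*I)^m * Complex.exp (((j:ℂ)*I)*x) * (-I/2)
        + (-((j:ℂ)*I))^m * Complex.exp ((-((j:ℂ)*I))*x) * (I/2) := by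
  rw [show ((j:ℂ)*I)*(x:ℂ) = ((j:ℂ)*(x:ℂ))*I by ring,
    show (-((j:ℂ)*I))*(x:ℂ) = -((j:ℂ)*(x:ℂ))*I by ring]
  push_cast [Complex.ofReal_sin]
  rw [show Complex.sin ((j:ℂ)*(x:ℂ) + (m:ℂ)*((Real.pi:ℂ)/2))
      = (Complex.exp (-((j:ℂ)*(x:ℂ) + (m:ℂ)*((Real.pi:ℂ)/2)) * I)
        - Complex.exp (((j:ℂ)*(x:ℂ) + (m:ℂ)*((Real.pi:ℂ)/2)) * I)) * I / 2 from rfl]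
  rw [exp_shift_pos, exp_shift_neg]
  ring

lemma expand_cos (j x : ℝ) (m : ℕ) :
    ((j^m * Real.cos (j*x + m*(Real.pi/2)) : ℝ) : ℂ) =
      ((j:ℂ)*I)^m * Complex.exp (((j:ℂ)*I)*x) * (1/2)
        + (-((j:ℂ)*I))^m * Complex.exp ((-((j:ℂ)*I))*x) * (1/2) := by
  rw [show ((j:ℂ)*I)*(x:ℂ) = ((j:ℂ)*(x:ℂ))*I by ring,
    show (-((j:ℂ)*I))*(x:ℂ) = -((j:ℂ)*(x:ℂ))*I by ring]
  push_cast [Complex.ofReal_cos]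
  rw [show Complex.cos ((j:ℂ)*(x:ℂ) + (m:ℂ)*((Real.pi:ℂ)/2))
      = (Complex.exp (((j:ℂ)*(x:ℂ) + (m:ℂ)*((Real.pi:ℂ)/2)) * I)
        + Complex.exp (-((j:ℂ)*(x:ℂ) + (m:ℂ)*((Real.pi:ℂ)/2)) * I)) / 2 from rfl]
  rw [exp_shift_pos, exp_shift_neg]
  ring

/-- For every `x ∈ ℝ`, the `2d × 2d` Wronskian matrix with
`(m, l)` entry `φ_{l+1}^{(m)}(x)` (`0 ≤ m ≤ 2d - 1`, `1 ≤ l + 1 ≤ 2d`) has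
nonzero determinant, i.e. is invertible. -/
theorem wronskian_det_ne_zero (d : ℕ) (hd : 1 ≤ d) (x : ℝ) :
    (Matrix.of fun m l : Fin (2 * d) =>
        iteratedDeriv (m : ℕ) (phi ((l : ℕ) + 1)) x).det ≠ 0 := by
  classical
  set A : Matrix (Fin (2*d)) (Fin (2*d)) ℝ :=
    Matrix.of fun m l : Fin (2 * d) => iteratedDeriv (m : ℕ) (phi ((l : ℕ) + 1)) x with hA
  -- frequencies with signs, as integers
  set z : Fin (2*d) → ℤ := fun k =>
    if (k:ℕ) % 2 = 0 then (((k:ℕ)/2 + 1 : ℕ) : ℤ) else -(((k:ℕ)/2 + 1 : ℕ) : ℤ) with hz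
  set μ : Fin (2*d) → ℂ := fun k => (z k : ℂ) * I with hμ
  set V : Matrix (Fin (2*d)) (Fin (2*d)) ℂ :=
    Matrix.of (fun m k : Fin (2*d) => μ k ^ (m:ℕ) * Complex.exp (μ k * x)) with hV
  set E : Fin (2*d) ≃ Fin 2 × Fin d :=
    { toFun := fun k => (⟨(k:ℕ) % 2, by omega⟩, ⟨(k:ℕ)/2, by have := k.isLt; omega⟩)
      invFun := fun p => ⟨2*(p.2:ℕ) + (p.1:ℕ), by have := p.1.isLt; have := p.2.isLt; omega⟩
      left_inv := fun k => by ext; simp; omega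
      right_inv := fun p => by
        ext <;> simp <;> omega } with hE
  set b : Fin d → Matrix (Fin 2) (Fin 2) ℂ := fun _ => !![-I/2, 1/2; I/2, 1/2] with hb
  set B : Matrix (Fin (2*d)) (Fin (2*d)) ℂ := (Matrix.blockDiagonal b).submatrix E E with hB
  -- the key factorization
  have key : A.map Complex.ofRealHom = V * B := by
    ext m l
    rw [Matrix.map_apply, Matrix.mul_apply]
    rw [Fintype.sum_equiv E
      (fun k => V m k * B k l)
      (fun p => V m (E.symm p) * Matrix.blockDiagonal b p (E l))
      (by intro k; simp [hB, Matrix.submatrix_apply])]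
    rw [Fintype.sum_prod_type]
    simp only [Matrix.blockDiagonal_apply, mul_ite, mul_zero]
    rw [Fin.sum_univ_two]
    simp only [Finset.sum_ite_eq', Finset.mem_univ, if_true]
    have hl2 : (l:ℕ) % 2 = 0 ∨ (l:ℕ) % 2 = 1 := Nat.mod_two_eq_zero_or_one _
    have hEl1 : ((E l).2 : ℕ) = (l:ℕ)/2 := rfl
    have hk0 : ((E.symm ((0:Fin 2), (E l).2)) : ℕ) = 2*((l:ℕ)/2) := by
      simp [hE]
    have hk1 : ((E.symm ((1:Fin 2), (E l).2)) : ℕ) = 2*((l:ℕ)/2) + 1 := by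
      simp [hE]
    have hμ0 : μ (E.symm ((0:Fin 2), (E l).2)) = (((l:ℕ)/2 + 1 : ℕ) : ℂ) * I := by
      simp only [hμ, hz]
      rw [hk0, if_pos (by omega), show (2*((l:ℕ)/2))/2 = (l:ℕ)/2 from by omega]
      norm_cast
    have hμ1 : μ (E.symm ((1:Fin 2), (E l).2)) = -((((l:ℕ)/2 + 1 : ℕ) : ℂ) * I) := by
      simp only [hμ, hz]
      rw [hk1, if_neg (by omega), show (2*((l:ℕ)/2)+1)/2 = (l:ℕ)/2 from by omega]
      rw [Int.cast_neg, Int.cast_natCast, neg_mul]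
    rcases hl2 with hl | hl
    · -- sine column
      have hphi : phi ((l:ℕ) + 1) = fun y => Real.sin (((((l:ℕ)/2 + 1 : ℕ)):ℝ) * y) := by
        funext y
        simp only [phi]
        rw [if_pos (by omega), show ((l:ℕ)+1+1)/2 = (l:ℕ)/2+1 by omega]
      have hEl0 : (E l).1 = (0 : Fin 2) := by
        ext; simpa [hE] using hl
      rw [hA, Matrix.of_apply, hphi, congrFun (iter_sin _ (m:ℕ)) x,
        Complex.ofRealHom_eq_coe, expand_sin]
      rw [hEl0, hV]
      simp only [Matrix.of_apply, hμ0, hμ1, hb,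
        Matrix.cons_val', Matrix.cons_val_zero, Matrix.cons_val_one, Matrix.head_cons,
        Matrix.empty_val', Matrix.cons_val_fin_one, Matrix.head_fin_const, Matrix.of_apply]
      push_cast
      ring
    · -- cosine column
      have hphi : phi ((l:ℕ) + 1) = fun y => Real.cos (((((l:ℕ)/2 + 1 : ℕ)):ℝ) * y) := by
        funext y
        simp only [phi]
        rw [if_neg (by omega), show ((l:ℕ)+1+1)/2 = (l:ℕ)/2+1 by omega]
      have hEl0 : (E l).1 = (1 : Fin 2) := by
        ext; simpa [hE] using hl
      rw [hA, Matrix.of_apply, hphi, congrFun (iter_cos _ (m:ℕ)) x,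
        Complex.ofRealHom_eq_coe, expand_cos]
      rw [hEl0, hV]
      simp only [Matrix.of_apply, hμ0, hμ1, hb,
        Matrix.cons_val', Matrix.cons_val_zero, Matrix.cons_val_one, Matrix.head_cons,
        Matrix.empty_val', Matrix.cons_val_fin_one, Matrix.head_fin_const, Matrix.of_apply]
      push_cast
      ring
  -- determinant of V
  have hVdet : V.det ≠ 0 := by
    have hVfact : V = (Matrix.vandermonde μ).transpose * Matrix.diagonal (fun k => Complex.exp (μ k * x)) := by
      ext m k
      rw [Matrix.mul_diagonal]
      simp [hV, Matrix.vandermonde, Matrix.transpose_apply]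
    rw [hVfact, Matrix.det_mul, Matrix.det_transpose, Matrix.det_diagonal]
    apply mul_ne_zero
    · rw [Matrix.det_vandermonde_ne_zero_iff]
      intro k k' hkk'
      have hz' : z k = z k' := by
        have := mul_right_cancel₀ Complex.I_ne_zero hkk'
        exact_mod_cast this
      simp only [hz] at hz'
      split_ifs at hz' with h1 h2 h2 <;>
        · ext
          omega
    · exact Finset.prod_ne_zero_iff.2 fun k _ => Complex.exp_ne_zero _
  -- determinant of B
  have hBdet : B.det ≠ 0 := by
    rw [hB, Matrix.det_submatrix_equiv_self, Matrix.det_blockDiagonal]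
    apply Finset.prod_ne_zero_iff.2
    intro j _
    rw [hb, Matrix.det_fin_two_of]
    intro hcon
    apply Complex.I_ne_zero
    have : -I/2 * (1/2) - 1/2 * (I/2) = -(I/4) - I/4 := by ring
    rw [this] at hcon
    have : I = 0 := by linear_combination -2*hcon
    exact this
  -- conclude
  intro hc
  have h1 : (A.map Complex.ofRealHom).det = 0 := by
    have h2 := RingHom.map_det Complex.ofRealHom A
    rw [RingHom.mapMatrix_apply] at h2
    rw [← h2, hc, map_zero]
  rw [key, Matrix.det_mul] at h1
  exact (mul_ne_zero hVdet hBdet) h1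
end

section
/- Let n ≥ 1 and let A be an n × 2d real matrix of rank n. Denote by φ(x) ∈ ℝ^{2d} the vector with entries φ_l(x) and by φ^{(m)}(x) the vector with entries φ_l^{(m)}(x). If x₀ ∈ ℝ satisfies A·φ(x₀) = 0, then there exists m with 1 ≤ m ≤ 2d − 1 such that A·φ^{(m)}(x₀) ≠ 0. -/
open Real

section TrigDerivatives

variable (a x : ℝ) (j : ℕ)

theorem iteratedDeriv_two_mul_sin_const_mul :
    iteratedDeriv (2 * j) (fun x => sin (a * x)) x = (-1) ^ j * (a ^ 2) ^ j * sin (a * x) := by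
  rw [iteratedDeriv_comp_const_mul contDiff_sin, iteratedDeriv_even_sin, pow_mul]
  simp only [Pi.mul_apply, Pi.pow_apply, Pi.neg_apply, Pi.one_apply]
  ring

theorem iteratedDeriv_two_mul_cos_const_mul :
    iteratedDeriv (2 * j) (fun x => cos (a * x)) x = (-1) ^ j * (a ^ 2) ^ j * cos (a * x) := by
  rw [iteratedDeriv_comp_const_mul contDiff_cos, iteratedDeriv_even_cos, pow_mul]
  simp only [Pi.mul_apply, Pi.pow_apply, Pi.neg_apply, Pi.one_apply]
  ring

theorem iteratedDeriv_two_mul_add_one_sin_const_mul :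
    iteratedDeriv (2 * j + 1) (fun x => sin (a * x)) x =
      (-1) ^ j * (a ^ 2) ^ j * (a * cos (a * x)) := by
  rw [iteratedDeriv_comp_const_mul contDiff_sin, iteratedDeriv_odd_sin, pow_succ, pow_mul]
  simp only [Pi.mul_apply, Pi.pow_apply, Pi.neg_apply, Pi.one_apply]
  ring

theorem iteratedDeriv_two_mul_add_one_cos_const_mul :
    iteratedDeriv (2 * j + 1) (fun x => cos (a * x)) x =
      (-1) ^ j * (a ^ 2) ^ j * -(a * sin (a * x)) := by
  rw [iteratedDeriv_comp_const_mul contDiff_cos, iteratedDeriv_odd_cos, pow_succ, pow_mul]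
  simp only [Pi.mul_apply, Pi.pow_apply, Pi.neg_apply, Pi.one_apply]
  ring

end TrigDerivatives

theorem eq_zero_of_mul_sin_add_mul_cos_eq_zero {s r θ : ℝ} (h₁ : s * sin θ + r * cos θ = 0)
    (h₂ : s * cos θ - r * sin θ = 0) : s = 0 ∧ r = 0 :=
  ⟨by linear_combination sin θ * h₁ + cos θ * h₂ - s * sin_sq_add_cos_sq θ,
    by linear_combination cos θ * h₁ - sin θ * h₂ - r * sin_sq_add_cos_sq θ⟩

theorem eq_zero_of_forall_sum_iteratedDeriv_sin_cos_eq_zero {d : ℕ} {a : Fin d → ℝ}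
    (ha : ∀ k, a k ≠ 0) (ha_sq : Function.Injective fun k => a k ^ 2) (s r : Fin d → ℝ)
    (x₀ : ℝ)
    (h : ∀ m < 2 * d, ∑ k, (s k * iteratedDeriv m (fun x => sin (a k * x)) x₀ +
      r k * iteratedDeriv m (fun x => cos (a k * x)) x₀) = 0) :
    s = 0 ∧ r = 0 := by
  have heven : (fun k => s k * sin (a k * x₀) + r k * cos (a k * x₀)) = 0 := by
    refine Matrix.eq_zero_of_forall_pow_sum_mul_pow_eq_zero ha_sq fun j => ?_
    have := h (2 * j) (by omega)
    simp only [iteratedDeriv_two_mul_sin_const_mul, iteratedDeriv_two_mul_cos_const_mul] at this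
    rw [← mul_right_inj' (pow_ne_zero j (neg_ne_zero.mpr one_ne_zero)), mul_zero,
      Finset.mul_sum, ← this]
    exact Finset.sum_congr rfl fun k _ => by ring
  have hodd : (fun k => a k * (s k * cos (a k * x₀) - r k * sin (a k * x₀))) = 0 := by
    refine Matrix.eq_zero_of_forall_pow_sum_mul_pow_eq_zero ha_sq fun j => ?_
    have := h (2 * j + 1) (by omega)
    simp only [iteratedDeriv_two_mul_add_one_sin_const_mul,
      iteratedDeriv_two_mul_add_one_cos_const_mul] at this
    rw [← mul_right_inj' (pow_ne_zero j (neg_ne_zero.mpr one_ne_zero)), mul_zero,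
      Finset.mul_sum, ← this]
    exact Finset.sum_congr rfl fun k _ => by ring
  have hsr k := eq_zero_of_mul_sin_add_mul_cos_eq_zero (congrFun heven k)
    ((mul_eq_zero.mp (congrFun hodd k)).resolve_left (ha k))
  exact ⟨funext fun k => (hsr k).1, funext fun k => (hsr k).2⟩

theorem phi_two_mul_add_one (k : ℕ) :
    phi (2 * k + 1) = fun x => sin (((k + 1 : ℕ) : ℝ) * x) := by
  funext x
  rw [phi, if_pos (by omega), show (2 * k + 1 + 1) / 2 = k + 1 by omega]

theorem phi_two_mul_add_two (k : ℕ) :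
    phi (2 * k + 2) = fun x => cos (((k + 1 : ℕ) : ℝ) * x) := by
  funext x
  rw [phi, if_neg (by omega), show (2 * k + 2 + 1) / 2 = k + 1 by omega]

theorem eq_zero_of_forall_sum_mul_iteratedDeriv_phi_eq_zero {d : ℕ} (c : Fin (2 * d) → ℝ)
    (x₀ : ℝ) (h : ∀ m < 2 * d, ∑ l, c l * iteratedDeriv m (phi (l + 1)) x₀ = 0) : c = 0 := by
  let e : Fin d × Fin 2 ≃ Fin (2 * d) := finProdFinEquiv.trans (finCongr (Nat.mul_comm d 2))
  have hfreq_pos (k : Fin d) : (0 : ℝ) < ((k + 1 : ℕ) : ℝ) := Nat.cast_pos.mpr k.val.succ_pos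
  obtain ⟨hs, hr⟩ := eq_zero_of_forall_sum_iteratedDeriv_sin_cos_eq_zero
    (a := fun k : Fin d => ((k + 1 : ℕ) : ℝ)) (fun k => (hfreq_pos k).ne')
    (fun k k' hkk' => by
      have := (sq_eq_sq₀ (hfreq_pos k).le (hfreq_pos k').le).mp hkk'
      exact Fin.ext (Nat.succ_injective (Nat.cast_injective this)))
    (fun k => c (e (k, 0))) (fun k => c (e (k, 1))) x₀ fun m hm => by
      rw [← h m hm, ← e.sum_comp, Fintype.sum_prod_type]
      refine Finset.sum_congr rfl fun k _ => ?_
      have he (p : Fin 2) : (e (k, p) : ℕ) + 1 = 2 * k + (p + 1) := by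
        change (p : ℕ) + 2 * k + 1 = _
        ring
      rw [Fin.sum_univ_two, he, he, Fin.val_zero, Fin.val_one, phi_two_mul_add_one,
        phi_two_mul_add_two]
  ext l
  obtain ⟨⟨k, p⟩, rfl⟩ := e.surjective l
  fin_cases p
  · exact congrFun hs k
  · exact congrFun hr k

theorem exists_deriv_mulVec_ne_zero_general (d n : ℕ) (hn : 1 ≤ n)
    (A : Matrix (Fin n) (Fin (2 * d)) ℝ) (hrank : A.rank = n)
    (x₀ : ℝ) (hx₀ : A.mulVec (fun l => phi ((l : ℕ) + 1) x₀) = 0) :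
    ∃ m : ℕ, 1 ≤ m ∧ m ≤ 2 * d - 1 ∧
      A.mulVec (fun l => iteratedDeriv m (phi ((l : ℕ) + 1)) x₀) ≠ 0 := by
  by_contra! hcon
  have hderiv : ∀ m < 2 * d, A.mulVec (fun l => iteratedDeriv m (phi ((l : ℕ) + 1)) x₀) = 0
    | 0, _ => by simpa using hx₀
    | m + 1, hm => hcon (m + 1) (by omega) (by omega)
  have hA : A = 0 := by
    ext i l
    refine congrFun
      (eq_zero_of_forall_sum_mul_iteratedDeriv_phi_eq_zero (A i) x₀ fun m hm => ?_) l
    simpa [Matrix.mulVec, dotProduct] using congrFun (hderiv m hm) i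
  rw [hA, Matrix.rank_zero] at hrank
  omega

/-- If `A` is an `n × 2d` real matrix of rank `n ≥ 1` and
`A · φ(x₀) = 0`, then `A · φ^{(m)}(x₀) ≠ 0` for some `1 ≤ m ≤ 2d - 1`. -/
theorem exists_deriv_mulVec_ne_zero (d n : ℕ) (hd : 1 ≤ d) (hn : 1 ≤ n)
    (A : Matrix (Fin n) (Fin (2 * d)) ℝ) (hrank : A.rank = n)
    (x₀ : ℝ) (hx₀ : A.mulVec (fun l => phi ((l : ℕ) + 1) x₀) = 0) :
    ∃ m : ℕ, 1 ≤ m ∧ m ≤ 2 * d - 1 ∧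
      A.mulVec (fun l => iteratedDeriv m (phi ((l : ℕ) + 1)) x₀) ≠ 0 :=
  exists_deriv_mulVec_ne_zero_general d n hn A hrank x₀ hx₀
end

section
/- For every integer α ≥ 1, the α-fold iterated Lie bracket of W with V satisfies ad_V^α(W)(x, y, z) = (0, −α ∑_{l=1}^{2d} φ_l^{(α−1)}(x)(Z_l h)(z), ∑_{l=1}^{2d} φ_l^{(α)}(x) Z_l(z)); that is, D_V^α(W) = ∑_l φ_l^{(α)} Z_l − α ∑_l φ_l^{(α−1)} (Z_l h) ∂/∂y. -/
/-- The Lie bracket of two vector fields on a real normed space: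
`[X, Y](p) = DY(p) X(p) - DX(p) Y(p)`. -/
noncomputable def lieBracket {E : Type*} [NormedAddCommGroup E] [NormedSpace ℝ E]
    (X Y : E → E) : E → E := fun p =>
  fderiv ℝ Y p (X p) - fderiv ℝ X p (Y p)

/-- `adIter X Y α = ad_X^α (Y)`, the `α`-fold iterated bracket `[X, [X, …, [X, Y]…]]`,
with `adIter X Y 0 = Y`. -/
noncomputable def adIter {E : Type*} [NormedAddCommGroup E] [NormedSpace ℝ E]
    (X Y : E → E) : ℕ → E → E
  | 0 => Y
  | (α + 1) => lieBracket X (adIter X Y α)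

/-- The vector field `V(x, y, z) = ∂/∂x + h(z) ∂/∂y` on `ℝ × ℝ × ℝⁿ`. -/
def Vfield (n : ℕ) (h : (Fin n → ℝ) → ℝ) :
    ℝ × ℝ × (Fin n → ℝ) → ℝ × ℝ × (Fin n → ℝ) := fun p => (1, h p.2.2, 0)

/-- The vector field `W(x, y, z) = ∑_{l=1}^{2d} φ_l(x) Z_l(z)` on `ℝ × ℝ × ℝⁿ`. -/
noncomputable def Wfield (n d : ℕ) (Z : ℕ → (Fin n → ℝ) → (Fin n → ℝ)) :
    ℝ × ℝ × (Fin n → ℝ) → ℝ × ℝ × (Fin n → ℝ) := fun p =>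
  (0, 0, ∑ l ∈ Finset.Icc 1 (2 * d), phi l p.1 • Z l p.2.2)

open Finset ContinuousLinearMap

lemma phi_smooth (l : ℕ) : ContDiff ℝ (⊤ : ℕ∞) (phi l) := by
  unfold phi
  by_cases hl : l % 2 = 1 <;> simp only [hl, if_true, if_false]
  · exact Real.contDiff_sin.comp (contDiff_const.mul contDiff_id)
  · exact Real.contDiff_cos.comp (contDiff_const.mul contDiff_id)

lemma iter_smooth (l k : ℕ) : ContDiff ℝ (⊤ : ℕ∞) (iteratedDeriv k (phi l)) := by
  rw [iteratedDeriv_eq_iterate]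
  exact ContDiff.iterate_deriv k ((phi_smooth l).of_le (by simp))

lemma key (n d : ℕ) (h : (Fin n → ℝ) → ℝ) (hh : ContDiff ℝ (⊤ : ℕ∞) h)
    (Z : ℕ → (Fin n → ℝ) → (Fin n → ℝ)) (hZ : ∀ l, ContDiff ℝ (⊤ : ℕ∞) (Z l))
    (a : ℝ) (F G : ℕ → ℝ → ℝ)
    (hF : ∀ l, ContDiff ℝ (⊤ : ℕ∞) (F l)) (hG : ∀ l, ContDiff ℝ (⊤ : ℕ∞) (G l))
    (p : ℝ × ℝ × (Fin n → ℝ)) :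
    lieBracket (Vfield n h)
      (fun q => ((0 : ℝ),
        -(a * ∑ l ∈ Finset.Icc 1 (2 * d), F l q.1 * fderiv ℝ h q.2.2 (Z l q.2.2)),
        ∑ l ∈ Finset.Icc 1 (2 * d), G l q.1 • Z l q.2.2)) p =
      (0,
        -(a * ∑ l ∈ Finset.Icc 1 (2 * d), deriv (F l) p.1 * fderiv ℝ h p.2.2 (Z l p.2.2))
          - ∑ l ∈ Finset.Icc 1 (2 * d), G l p.1 * fderiv ℝ h p.2.2 (Z l p.2.2),
        ∑ l ∈ Finset.Icc 1 (2 * d), deriv (G l) p.1 • Z l p.2.2) := by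
  set g : ℕ → (Fin n → ℝ) → ℝ := fun l z => fderiv ℝ h z (Z l z) with hg_def
  have hg : ∀ l, ContDiff ℝ (⊤ : ℕ∞) (g l) := fun l =>
    (hh.fderiv_right (by simp)).clm_apply ((hZ l).of_le (by simp))
  -- derivative of the projection q ↦ q.2.2
  have hsnd2 : HasFDerivAt (fun q : ℝ × ℝ × (Fin n → ℝ) => q.2.2)
      ((snd ℝ ℝ (Fin n → ℝ)).comp (snd ℝ ℝ (ℝ × (Fin n → ℝ)))) p :=
    hasFDerivAt_snd.comp p hasFDerivAt_snd
  -- derivative of V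
  have hV : HasFDerivAt (Vfield n h)
      (((0 : (ℝ × ℝ × (Fin n → ℝ)) →L[ℝ] ℝ)).prod
        (((fderiv ℝ h p.2.2).comp ((snd ℝ ℝ (Fin n → ℝ)).comp (snd ℝ ℝ (ℝ × (Fin n → ℝ))))).prod
          (0 : (ℝ × ℝ × (Fin n → ℝ)) →L[ℝ] (Fin n → ℝ)))) p :=
    HasFDerivAt.prodMk (hasFDerivAt_const (1 : ℝ) p)
      ((((hh.differentiable (by simp)) p.2.2).hasFDerivAt.comp p hsnd2).prodMk
        (hasFDerivAt_const (0 : Fin n → ℝ) p))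
  -- derivative of second component of Y
  have h2 : HasFDerivAt
      (fun q : ℝ × ℝ × (Fin n → ℝ) => -(a * ∑ l ∈ Finset.Icc 1 (2 * d), F l q.1 * g l q.2.2))
      (-(a • ∑ l ∈ Finset.Icc 1 (2 * d),
        (F l p.1 • ((fderiv ℝ (g l) p.2.2).comp ((snd ℝ ℝ (Fin n → ℝ)).comp (snd ℝ ℝ (ℝ × (Fin n → ℝ)))))
          + g l p.2.2 • ((smulRight (1 : ℝ →L[ℝ] ℝ) (deriv (F l) p.1)).comp (fst ℝ ℝ (ℝ × (Fin n → ℝ))))))) p := by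
    apply HasFDerivAt.neg
    apply HasFDerivAt.const_mul
    apply HasFDerivAt.fun_sum
    intro l _
    exact (((((hF l).differentiable (by simp)) p.1).hasDerivAt.hasFDerivAt).comp p hasFDerivAt_fst).mul
      ((((hg l).differentiable (by simp)) p.2.2).hasFDerivAt.comp (g := g l) p hsnd2)
  -- derivative of third component of Y
  have h3 : HasFDerivAt
      (fun q : ℝ × ℝ × (Fin n → ℝ) => ∑ l ∈ Finset.Icc 1 (2 * d), G l q.1 • Z l q.2.2)
      (∑ l ∈ Finset.Icc 1 (2 * d),
        (G l p.1 • ((fderiv ℝ (Z l) p.2.2).comp ((snd ℝ ℝ (Fin n → ℝ)).comp (snd ℝ ℝ (ℝ × (Fin n → ℝ)))))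
          + ((smulRight (1 : ℝ →L[ℝ] ℝ) (deriv (G l) p.1)).comp (fst ℝ ℝ (ℝ × (Fin n → ℝ)))).smulRight (Z l p.2.2))) p := by
    apply HasFDerivAt.fun_sum
    intro l _
    exact ((((((hG l).differentiable (by simp)) p.1).hasDerivAt.hasFDerivAt).comp p hasFDerivAt_fst)).smul
      ((((hZ l).differentiable (by simp)) p.2.2).hasFDerivAt.comp p hsnd2)
  have hY : HasFDerivAt
      (fun q : ℝ × ℝ × (Fin n → ℝ) => ((0 : ℝ),
        -(a * ∑ l ∈ Finset.Icc 1 (2 * d), F l q.1 * g l q.2.2),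
        ∑ l ∈ Finset.Icc 1 (2 * d), G l q.1 • Z l q.2.2)) _ p :=
    HasFDerivAt.prodMk (hasFDerivAt_const (0 : ℝ) p) (h2.prodMk h3)
  simp only [lieBracket]
  rw [hY.fderiv, hV.fderiv]
  simp only [Vfield, ContinuousLinearMap.prod_apply, coe_comp', Function.comp_apply, coe_snd', coe_fst',
    ContinuousLinearMap.neg_apply, ContinuousLinearMap.smul_apply,
    ContinuousLinearMap.sum_apply, ContinuousLinearMap.add_apply,
    smulRight_apply, one_apply, ContinuousLinearMap.zero_apply, map_zero,
    smul_eq_mul, mul_one, one_mul, map_sum, map_smul]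
  ext
  · simp
  · simp [mul_comm, hg_def]
  · simp

/-- For `α ≥ 1`,
`ad_V^α(W) = ∑_l φ_l^{(α)} Z_l - α ∑_l φ_l^{(α-1)} (Z_l h) ∂/∂y`. -/
theorem adIter_V_W (d n : ℕ) (hd : 1 ≤ d)
    (h : (Fin n → ℝ) → ℝ) (hh : ContDiff ℝ (⊤ : ℕ∞) h)
    (Z : ℕ → (Fin n → ℝ) → (Fin n → ℝ)) (hZ : ∀ l, ContDiff ℝ (⊤ : ℕ∞) (Z l))
    (α : ℕ) (hα : 1 ≤ α) (p : ℝ × ℝ × (Fin n → ℝ)) :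
    adIter (Vfield n h) (Wfield n d Z) α p =
      (0,
        -((α : ℝ) * ∑ l ∈ Finset.Icc 1 (2 * d),
            iteratedDeriv (α - 1) (phi l) p.1 * fderiv ℝ h p.2.2 (Z l p.2.2)),
        ∑ l ∈ Finset.Icc 1 (2 * d), iteratedDeriv α (phi l) p.1 • Z l p.2.2) := by
  induction α, hα using Nat.le_induction generalizing p with
  | base =>
    have hWf : Wfield n d Z = fun q : ℝ × ℝ × (Fin n → ℝ) =>
        ((0 : ℝ),
          -((0 : ℝ) * ∑ l ∈ Finset.Icc 1 (2 * d), phi l q.1 * fderiv ℝ h q.2.2 (Z l q.2.2)),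
          ∑ l ∈ Finset.Icc 1 (2 * d), phi l q.1 • Z l q.2.2) := by
      funext q; simp [Wfield]
    show lieBracket (Vfield n h) (adIter (Vfield n h) (Wfield n d Z) 0) p = _
    rw [show adIter (Vfield n h) (Wfield n d Z) 0 = Wfield n d Z from rfl, hWf,
      key n d h hh Z hZ 0 phi phi (fun l => (phi_smooth l).of_le (by simp))
        (fun l => (phi_smooth l).of_le (by simp)) p]
    simp [iteratedDeriv_zero, iteratedDeriv_one]
  | succ α hα ih =>
    have hfun : adIter (Vfield n h) (Wfield n d Z) α = fun q : ℝ × ℝ × (Fin n → ℝ) =>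
        ((0 : ℝ),
          -((α : ℝ) * ∑ l ∈ Finset.Icc 1 (2 * d),
              iteratedDeriv (α - 1) (phi l) q.1 * fderiv ℝ h q.2.2 (Z l q.2.2)),
          ∑ l ∈ Finset.Icc 1 (2 * d), iteratedDeriv α (phi l) q.1 • Z l q.2.2) := funext ih
    show lieBracket (Vfield n h) (adIter (Vfield n h) (Wfield n d Z) α) p = _
    rw [hfun, key n d h hh Z hZ α (fun l => iteratedDeriv (α - 1) (phi l))
      (fun l => iteratedDeriv α (phi l)) (fun l => iter_smooth l _) (fun l => iter_smooth l _) p]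
    have hd1 : ∀ l, deriv (iteratedDeriv (α - 1) (phi l)) = iteratedDeriv α (phi l) := by
      intro l; rw [← iteratedDeriv_succ, Nat.sub_add_cancel hα]
    have hd2 : ∀ l, deriv (iteratedDeriv α (phi l)) = iteratedDeriv (α + 1) (phi l) := by
      intro l; rw [← iteratedDeriv_succ]
    simp only [hd1, hd2, Nat.add_sub_cancel]
    refine Prod.ext rfl (Prod.ext ?_ rfl)
    push_cast
    ring
end

section
/- Assume that for every z ∈ ℝ^n the vectors Z_1(z), …, Z_{2d}(z) span ℝ^n (with n ≥ 1). Then the set E = {(x, y, z) ∈ ℝ^{2+n} : W(x, y, z) = 0} = {(x, y, z) : ∑_{l=1}^{2d} φ_l(x) Z_l(z) = 0} is closed and has Lebesgue measure zero in ℝ^{2+n}, and at every point p ∉ E the vectors V(p) and W(p) are linearly independent; hence the span of V and W has dimension 2 outside a closed set of measure zero. -/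
open Finset MeasureTheory Complex Polynomial

lemma pair_sum {M : Type*} [AddCommMonoid M] (m : ℕ) (F : ℕ → M) :
    ∑ l ∈ Finset.Icc 1 (2*m), F l = ∑ j ∈ Finset.Icc 1 m, (F (2*j-1) + F (2*j)) := by
  induction m with
  | zero => simp
  | succ m ih =>
    have h1 : 2 * (m+1) = (2*m + 1) + 1 := by ring
    rw [h1, Finset.sum_Icc_succ_top (by omega), Finset.sum_Icc_succ_top (by omega),
      Finset.sum_Icc_succ_top (by omega), ih]
    rw [show 2*(m+1)-1 = 2*m+1 from by omega, show 2*(m+1) = 2*m+1+1 from by omega]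
    abel

lemma phi_odd (j : ℕ) (hj : 1 ≤ j) (x : ℝ) : phi (2*j-1) x = Real.sin (j * x) := by
  have h1 : (2*j-1) % 2 = 1 := by omega
  have h2 : ((2*j-1) + 1) / 2 = j := by omega
  simp [phi, h1, h2]

lemma phi_even (j : ℕ) (x : ℝ) : phi (2*j) x = Real.cos (j * x) := by
  have h1 : (2*j) % 2 ≠ 1 := by omega
  have h2 : ((2*j) + 1) / 2 = j := by omega
  simp [phi, h1, h2]

noncomputable def Ppoly (dd : ℕ) (a b : ℕ → ℝ) : Polynomial ℂ :=
  ∑ j ∈ Finset.Icc 1 dd, (Polynomial.C (((b j : ℂ) - (a j : ℂ) * Complex.I)/2) * Polynomial.X^(dd+j)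
    + Polynomial.C (((b j : ℂ) + (a j : ℂ) * Complex.I)/2) * Polynomial.X^(dd-j))

lemma Ppoly_eval (dd : ℕ) (a b : ℕ → ℝ) (x : ℝ) :
    (Ppoly dd a b).eval (Complex.exp (x * Complex.I)) =
      Complex.exp (x * Complex.I) ^ dd *
        ((∑ j ∈ Finset.Icc 1 dd, (a j * Real.sin (j*x) + b j * Real.cos (j*x)) : ℝ) : ℂ) := by
  set E := Complex.exp (x * Complex.I) with hE
  have hE0 : E ≠ 0 := Complex.exp_ne_zero _
  rw [Ppoly, Polynomial.eval_finset_sum, Complex.ofReal_sum, Finset.mul_sum]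
  refine Finset.sum_congr rfl fun j hj => ?_
  have hj1 : 1 ≤ j := (Finset.mem_Icc.mp hj).1
  have hjd : j ≤ dd := (Finset.mem_Icc.mp hj).2
  have hpow : E ^ (dd - j) * E ^ j = E ^ dd := by
    rw [← pow_add]; congr 1; omega
  have hEj : E ^ j = Complex.exp ((j : ℝ) * x * Complex.I) := by
    rw [hE, ← Complex.exp_nat_mul]; congr 1; push_cast; ring
  have hEjinv : E ^ (dd - j) = E ^ dd * Complex.exp (-((j:ℝ) * x) * Complex.I) := by
    have : Complex.exp (-((j:ℝ) * x) * Complex.I) = (E ^ j)⁻¹ := by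
      rw [hEj, ← Complex.exp_neg]; ring_nf
    rw [this, ← hpow, mul_assoc, mul_inv_cancel₀ (pow_ne_zero _ hE0), mul_one]
  simp only [Polynomial.eval_add, Polynomial.eval_mul, Polynomial.eval_C, Polynomial.eval_pow,
    Polynomial.eval_X, pow_add, hEjinv]
  rw [hEj, Complex.exp_mul_I, Complex.exp_mul_I]
  push_cast
  simp only [Complex.ofReal_sin, Complex.ofReal_cos, Complex.cos_neg, Complex.sin_neg]
  push_cast
  set c : ℂ := Complex.cos ((j:ℂ) * x)
  set s : ℂ := Complex.sin ((j:ℂ) * x)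
  linear_combination (-(E^dd * (a j : ℂ) * s)) * Complex.I_sq

lemma Ppoly_coeff_zero (dd : ℕ) (a b : ℕ → ℝ) (hP : Ppoly dd a b = 0) :
    ∀ j ∈ Finset.Icc 1 dd, a j = 0 ∧ b j = 0 := by
  intro j0 hj0
  have hj01 : 1 ≤ j0 := (Finset.mem_Icc.mp hj0).1
  have hj0d : j0 ≤ dd := (Finset.mem_Icc.mp hj0).2
  have hcoeff : ∀ k, (Ppoly dd a b).coeff k =
      ∑ j ∈ Finset.Icc 1 dd, ((if k = dd + j then ((b j : ℂ) - (a j : ℂ) * Complex.I)/2 else 0)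
        + (if k = dd - j then ((b j : ℂ) + (a j : ℂ) * Complex.I)/2 else 0)) := by
    intro k
    rw [Ppoly, Polynomial.finset_sum_coeff]
    refine Finset.sum_congr rfl fun j hj => ?_
    simp [Polynomial.coeff_X_pow]
  have hu : (((b j0 : ℂ) - (a j0 : ℂ) * Complex.I)/2) = 0 := by
    have h1 := hcoeff (dd + j0)
    rw [hP] at h1
    simp only [Polynomial.coeff_zero] at h1
    rw [eq_comm, Finset.sum_eq_single_of_mem j0 hj0] at h1
    · rw [if_pos rfl, if_neg (by omega), add_zero] at h1
      exact h1
    · intro j hj hne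
      have hj1 : 1 ≤ j := (Finset.mem_Icc.mp hj).1
      have hjd : j ≤ dd := (Finset.mem_Icc.mp hj).2
      rw [if_neg (by omega), if_neg (by omega), add_zero]
  have hv : (((b j0 : ℂ) + (a j0 : ℂ) * Complex.I)/2) = 0 := by
    have h1 := hcoeff (dd - j0)
    rw [hP] at h1
    simp only [Polynomial.coeff_zero] at h1
    rw [eq_comm, Finset.sum_eq_single_of_mem j0 hj0] at h1
    · rw [if_neg (by omega), if_pos (by omega), zero_add] at h1
      exact h1
    · intro j hj hne
      have hj1 : 1 ≤ j := (Finset.mem_Icc.mp hj).1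
      have hjd : j ≤ dd := (Finset.mem_Icc.mp hj).2
      rw [if_neg (by omega), if_neg (by omega), add_zero]
  have hb : (b j0 : ℂ) = 0 := by linear_combination hu + hv
  have ha : (a j0 : ℂ) * Complex.I = 0 := by linear_combination hv - hu
  refine ⟨?_, ?_⟩
  · rcases mul_eq_zero.mp ha with h | h
    · exact_mod_cast h
    · exact absurd h Complex.I_ne_zero
  · exact_mod_cast hb

lemma slice_null (dd : ℕ) (a b : ℕ → ℝ)
    (hne : ∃ j ∈ Finset.Icc 1 dd, a j ≠ 0 ∨ b j ≠ 0) :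
    MeasureTheory.volume {x : ℝ |
      ∑ j ∈ Finset.Icc 1 dd, (a j * Real.sin (j*x) + b j * Real.cos (j*x)) = 0} = 0 := by
  set f : ℝ → ℝ := fun x => ∑ j ∈ Finset.Icc 1 dd, (a j * Real.sin (j*x) + b j * Real.cos (j*x))
    with hf
  set s : Set ℝ := {x | f x = 0} with hs
  by_contra hvol
  -- P is nonzero
  have hPne : Ppoly dd a b ≠ 0 := by
    intro hP
    obtain ⟨j, hj, hab⟩ := hne
    obtain ⟨ha, hb⟩ := Ppoly_coeff_zero dd a b hP j hj
    tauto
  -- s is closed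
  have hfc : Continuous f := by
    apply continuous_finset_sum
    intro j _
    exact ((continuous_const.mul ((Real.continuous_sin.comp (continuous_const.mul continuous_id))))).add
      ((continuous_const.mul ((Real.continuous_cos.comp (continuous_const.mul continuous_id)))))
  have hsc : IsClosed s := isClosed_eq hfc continuous_const
  -- s is uncountable
  have hunc : ¬ s.Countable := fun hc => hvol (hc.measure_zero _)
  -- get an accumulation point
  obtain ⟨C, hCperf, hCne, hCs⟩ := exists_perfect_nonempty_of_isClosed_of_not_countable hsc hunc
  obtain ⟨x₀, hx₀⟩ := hCne
  have hacc : AccPt x₀ (Filter.principal s) :=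
    (hCperf.acc x₀ hx₀).mono (Filter.principal_mono.mpr hCs)
  have hx₀s : x₀ ∈ s := hCs hx₀
  -- G analytic
  set G : ℂ → ℂ := fun w => Polynomial.aeval (Complex.exp (w * Complex.I)) (Ppoly dd a b) with hG
  have hGa : AnalyticOnNhd ℂ G Set.univ := by
    intro w _
    exact AnalyticAt.aeval_polynomial ((analyticAt_id.mul analyticAt_const).cexp) _
  -- G vanishes on real zeros of f
  have hGzero : ∀ y : ℝ, f y = 0 → G (y : ℂ) = 0 := by
    intro y hy
    have := Ppoly_eval dd a b y
    rw [hG]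
    simp only [Polynomial.coe_aeval_eq_eval]
    rw [this, show (∑ j ∈ Finset.Icc 1 dd, (a j * Real.sin (j*y) + b j * Real.cos (j*y))) = f y from rfl, hy]
    simp
  -- frequently zero near x₀ in ℂ
  have htend : Filter.Tendsto (fun t : ℝ => (t : ℂ)) (nhdsWithin x₀ {x₀}ᶜ)
      (nhdsWithin (x₀ : ℂ) {(x₀ : ℂ)}ᶜ) := by
    apply Complex.continuous_ofReal.continuousWithinAt.tendsto_nhdsWithin
    intro t ht
    simp only [Set.mem_compl_iff, Set.mem_singleton_iff] at *
    exact fun hc => ht (by exact_mod_cast hc)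
  have hfreqR : ∃ᶠ y in nhdsWithin x₀ {x₀}ᶜ, y ∈ s := by
    rw [frequently_nhdsWithin_iff]
    have := (accPt_iff_frequently (x := x₀) (C := s)).mp hacc
    exact this.mono fun y hy => ⟨hy.2, hy.1⟩
  have hfreqC : ∃ᶠ w in nhdsWithin (x₀ : ℂ) {(x₀ : ℂ)}ᶜ, G w = 0 :=
    htend.frequently (hfreqR.mono fun y hy => hGzero y hy)
  have hev : ∀ᶠ w in nhds (x₀ : ℂ), G w = 0 :=
    ((hGa _ (Set.mem_univ _)).frequently_zero_iff_eventually_zero).mp hfreqC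
  -- identity theorem: G ≡ 0
  have hG0 : Set.EqOn G 0 Set.univ :=
    hGa.eqOn_zero_of_preconnected_of_eventuallyEq_zero isPreconnected_univ (Set.mem_univ _)
      (Filter.eventuallyEq_iff_exists_mem.mpr ⟨_, hev, fun w hw => hw⟩)
  -- infinitely many roots ⇒ P = 0
  apply hPne
  apply Polynomial.eq_zero_of_infinite_isRoot
  have hinj : Set.InjOn (fun x : ℝ => Complex.exp (x * Complex.I)) (Set.Ioo (0:ℝ) 1) := by
    intro x hx y hy hxy
    obtain ⟨m, hm⟩ := Complex.exp_eq_exp_iff_exists_int.mp hxy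
    have him : x = y + m * (2 * Real.pi) := by
      have := congrArg Complex.im hm
      simpa using this
    have hpi := Real.pi_gt_three
    rcases lt_trichotomy m 0 with h | h | h
    · have hm1 : m ≤ 0 - 1 := Int.le_sub_one_of_lt h
      have : (m : ℝ) ≤ -1 := by exact_mod_cast hm1
      nlinarith [hx.1, hx.2, hy.1, hy.2]
    · simpa [h] using him
    · have : (1 : ℝ) ≤ (m : ℝ) := by exact_mod_cast h
      nlinarith [hx.1, hx.2, hy.1, hy.2]
  apply Set.Infinite.mono (s := (fun x : ℝ => Complex.exp (x * Complex.I)) '' (Set.Ioo 0 1))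
  · rintro w ⟨x, _, rfl⟩
    have := hG0 (Set.mem_univ (x : ℂ))
    rw [hG] at this
    simpa [Polynomial.IsRoot, Polynomial.coe_aeval_eq_eval] using this
  · exact ((Set.Ioo_infinite (by norm_num : (0:ℝ) < 1)).image hinj)

lemma continuous_phi (l : ℕ) : Continuous (phi l) := by
  unfold phi; split_ifs <;> fun_prop

/-- If the `Z_l(z)` span `ℝⁿ` (`n ≥ 1`) at every `z`, then
`E = {p : W(p) = 0}` is closed and of Lebesgue measure zero, and at every
`p ∉ E` the vectors `V(p)` and `W(p)` are linearly independent; so the span of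
`V, W` is 2-dimensional outside a closed set of measure zero. -/
theorem singular_distribution (d n : ℕ) (hd : 1 ≤ d) (hn : 1 ≤ n)
    (h : (Fin n → ℝ) → ℝ) (hh : ContDiff ℝ (⊤ : ℕ∞) h)
    (Z : ℕ → (Fin n → ℝ) → (Fin n → ℝ)) (hZ : ∀ l, ContDiff ℝ (⊤ : ℕ∞) (Z l))
    (hZspan : ∀ z : Fin n → ℝ,
      Submodule.span ℝ (Set.range fun l : Fin (2 * d) => Z ((l : ℕ) + 1) z) = ⊤) :
    IsClosed {p : ℝ × ℝ × (Fin n → ℝ) | Wfield n d Z p = 0} ∧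
      MeasureTheory.volume {p : ℝ × ℝ × (Fin n → ℝ) | Wfield n d Z p = 0} = 0 ∧
      ∀ p : ℝ × ℝ × (Fin n → ℝ), p ∉ {p : ℝ × ℝ × (Fin n → ℝ) | Wfield n d Z p = 0} →
        LinearIndependent ℝ ![Vfield n h p, Wfield n d Z p] := by
  have hWc : Continuous (Wfield n d Z) := by
    unfold Wfield
    refine continuous_const.prodMk (continuous_const.prodMk ?_)
    exact continuous_finset_sum _ fun l _ =>
      ((continuous_phi l).comp continuous_fst).smul
        ((hZ l).continuous.comp (continuous_snd.comp continuous_snd))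
  refine ⟨isClosed_eq hWc continuous_const, ?_, ?_⟩
  · -- measure zero
    have hslice : ∀ z : Fin n → ℝ,
        MeasureTheory.volume {x : ℝ | ∑ l ∈ Finset.Icc 1 (2*d), phi l x • Z l z = 0} = 0 := by
      intro z
      have hex : ∃ l0 : Fin (2*d), Z ((l0 : ℕ) + 1) z ≠ 0 := by
        by_contra hcon
        push_neg at hcon
        have hle : Submodule.span ℝ (Set.range fun l : Fin (2*d) => Z ((l : ℕ) + 1) z)
            ≤ ⊥ := by
          rw [Submodule.span_le]
          rintro v ⟨l, rfl⟩
          simp [hcon l]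
        rw [hZspan z] at hle
        have h1 := hle (Submodule.mem_top (x := (fun _ => (1:ℝ) : Fin n → ℝ)))
        rw [Submodule.mem_bot] at h1
        have := congrFun h1 ⟨0, hn⟩
        norm_num at this
      obtain ⟨l0, hl0⟩ := hex
      obtain ⟨i, hi⟩ := Function.ne_iff.mp hl0
      set a : ℕ → ℝ := fun j => Z (2*j-1) z i with ha
      set b : ℕ → ℝ := fun j => Z (2*j) z i with hb
      have hsub : {x : ℝ | ∑ l ∈ Finset.Icc 1 (2*d), phi l x • Z l z = 0} ⊆
          {x : ℝ | ∑ j ∈ Finset.Icc 1 d, (a j * Real.sin (j*x) + b j * Real.cos (j*x)) = 0} := by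
        intro x hx
        rw [Set.mem_setOf_eq] at hx
        have hcoord := congrFun hx i
        simp only [Finset.sum_apply, Pi.smul_apply, Pi.zero_apply, smul_eq_mul] at hcoord
        rw [pair_sum d (fun l => phi l x * Z l z i)] at hcoord
        rw [Set.mem_setOf_eq, ← hcoord]
        refine Finset.sum_congr rfl fun j hj => ?_
        have hj1 : 1 ≤ j := (Finset.mem_Icc.mp hj).1
        rw [phi_odd j hj1, phi_even j, ha, hb]
        ring
      refine measure_mono_null hsub (slice_null d a b ?_)
      set l : ℕ := (l0 : ℕ) + 1 with hl
      have hl1 : 1 ≤ l := by omega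
      have hl2 : l ≤ 2*d := by have := l0.2; omega
      rcases Nat.even_or_odd l with he | ho
      · obtain ⟨k, hk⟩ := he
        refine ⟨l/2, Finset.mem_Icc.mpr (by omega), Or.inr ?_⟩
        rw [hb]
        show Z (2*(l/2)) z i ≠ 0
        have h2 : 2 * (l/2) = l := by omega
        rw [h2]
        simpa using hi
      · refine ⟨(l+1)/2, Finset.mem_Icc.mpr (by omega), Or.inl ?_⟩
        rw [ha]
        show Z (2*((l+1)/2) - 1) z i ≠ 0
        have h2 : 2 * ((l+1)/2) - 1 = l := by
          obtain ⟨k, hk⟩ := ho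
          omega
        rw [h2]
        simpa using hi
    set A' : Set ((Fin n → ℝ) × ℝ) :=
      {q | ∑ l ∈ Finset.Icc 1 (2*d), phi l q.2 • Z l q.1 = 0} with hA'
    have hScont : Continuous (fun q : (Fin n → ℝ) × ℝ =>
        ∑ l ∈ Finset.Icc 1 (2*d), phi l q.2 • Z l q.1) :=
      continuous_finset_sum _ fun l _ =>
        ((continuous_phi l).comp continuous_snd).smul ((hZ l).continuous.comp continuous_fst)
    have hA'meas : MeasurableSet A' := (isClosed_eq hScont continuous_const).measurableSet
    have hA'null : MeasureTheory.volume A' = 0 := by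
      rw [MeasureTheory.Measure.volume_eq_prod, MeasureTheory.Measure.measure_prod_null hA'meas]
      exact Filter.Eventually.of_forall fun z => hslice z
    set ψ : ℝ × ℝ × (Fin n → ℝ) → ((Fin n → ℝ) × ℝ) × ℝ :=
      fun p => ((p.2.2, p.1), p.2.1) with hψdef
    have hψ : MeasurePreserving ψ MeasureTheory.volume MeasureTheory.volume := by
      have hs1 : MeasurePreserving (Prod.map (id : ℝ → ℝ)
          (Prod.swap : ℝ × (Fin n → ℝ) → (Fin n → ℝ) × ℝ))
          MeasureTheory.volume MeasureTheory.volume :=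
        (MeasurePreserving.id _).prod Measure.measurePreserving_swap
      have hs2 : MeasurePreserving
          (MeasurableEquiv.prodAssoc.symm : ℝ × ((Fin n → ℝ) × ℝ) ≃ᵐ (ℝ × (Fin n → ℝ)) × ℝ)
          MeasureTheory.volume MeasureTheory.volume :=
        (MeasureTheory.volume_preserving_prodAssoc).symm MeasurableEquiv.prodAssoc
      have hs3 : MeasurePreserving (Prod.map (Prod.swap : ℝ × (Fin n → ℝ) → (Fin n → ℝ) × ℝ)
          (id : ℝ → ℝ)) MeasureTheory.volume MeasureTheory.volume :=
        (Measure.measurePreserving_swap).prod (MeasurePreserving.id _)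
      have hcomp := (hs3.comp hs2).comp hs1
      convert hcomp using 1
      rfl
    have hEeq : {p : ℝ × ℝ × (Fin n → ℝ) | Wfield n d Z p = 0} = ψ ⁻¹' (A' ×ˢ Set.univ) := by
      ext p
      simp only [Set.mem_setOf_eq, Set.mem_preimage, Set.mem_prod, Set.mem_univ, and_true,
        hψdef, hA', Wfield, Prod.ext_iff]
      simp
    rw [hEeq, hψ.measure_preimage ((hA'meas.prod MeasurableSet.univ).nullMeasurableSet),
      MeasureTheory.Measure.volume_eq_prod, MeasureTheory.Measure.prod_prod, hA'null, zero_mul]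
  · -- linear independence
    intro p hp
    rw [Set.mem_setOf_eq] at hp
    rw [LinearIndependent.pair_iff]
    intro s t hst
    have h1 : s * 1 + t * 0 = 0 := congrArg Prod.fst hst
    have hs0 : s = 0 := by simpa using h1
    have h3 : s • (0 : Fin n → ℝ) + t • (∑ l ∈ Finset.Icc 1 (2*d), phi l p.1 • Z l p.2.2) = 0 := by
      have := congrArg (fun q => q.2.2) hst
      simpa [Vfield, Wfield] using this
    rw [hs0] at h3 ⊢
    simp only [zero_smul, zero_add] at h3
    rcases smul_eq_zero.mp h3 with ht | hw
    · exact ⟨rfl, ht⟩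
    · exfalso
      apply hp
      rw [Wfield]
      simp [hw, Prod.ext_iff]
end
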